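/- arXiv:1503.07938 — 7 statements merged into one kernel-verified Lean document; each statement's English description precedes it below -/
import Mathlib

section
/- Let α ∈ S and δ > 0 with ‖(A + B(α))^{-1}‖ ≤ c(|α|), let Ã : X → Y be a bounded linear operator with ‖Ã − A‖ ≤ δ, and let q ∈ (0,1) satisfy δ·c(|α|) ≤ q. Then for every f ∈ Y one has ‖(Ã + B(α))^{-1} f‖ ≤ ‖(A + B(α))^{-1} f‖ + (δ·c(|α|)/(1 − q))·‖(A + B(α))^{-1} f‖. (Lemma 3, estimate (19).) -/
open Set Filter Topology

/-- Lemma 3, estimate (19): under the hypotheses of Lemma 3, the (unique)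
bounded inverse `T = (Ã + B(α))⁻¹` satisfies, for every `f ∈ Y`,
`‖T f‖ ≤ ‖(A + B(α))⁻¹ f‖ + (δ·c(|α|)/(1 − q))·‖(A + B(α))⁻¹ f‖`. -/
theorem lemma3_estimate19
    {X Y : Type*} [NormedAddCommGroup X] [NormedSpace ℝ X] [CompleteSpace X]
    [NormedAddCommGroup Y] [NormedSpace ℝ Y] [CompleteSpace Y]
    {n : ℕ} (S : Set (EuclideanSpace ℝ (Fin n)))
    (hS : (0 : EuclideanSpace ℝ (Fin n)) ∈ closure S)
    (A : X →L[ℝ] Y) (B : EuclideanSpace ℝ (Fin n) → X →L[ℝ] Y)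
    (Rinv : EuclideanSpace ℝ (Fin n) → Y →L[ℝ] X)
    (hinv : ∀ α ∈ S, (∀ x : X, Rinv α ((A + B α) x) = x) ∧
      (∀ y : Y, (A + B α) (Rinv α y) = y))
    (c : ℝ → ℝ) (hc_cont : ContinuousOn c (Ioi 0)) (hc_pos : ∀ r > 0, 0 < c r)
    (α : EuclideanSpace ℝ (Fin n)) (hα : α ∈ S)
    (δ : ℝ) (hδ : 0 < δ) (hbound : ‖Rinv α‖ ≤ c ‖α‖)
    (Atil : X →L[ℝ] Y) (hAtil : ‖Atil - A‖ ≤ δ)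
    (q : ℝ) (hq : q ∈ Ioo (0 : ℝ) 1) (hqc : δ * c ‖α‖ ≤ q) :
    ∀ T : Y →L[ℝ] X,
      ((∀ x : X, T ((Atil + B α) x) = x) ∧ (∀ y : Y, (Atil + B α) (T y) = y)) →
      ∀ f : Y, ‖T f‖ ≤ ‖Rinv α f‖ + (δ * c ‖α‖ / (1 - q)) * ‖Rinv α f‖ := by
  rintro T ⟨hT1, hT2⟩ f
  obtain ⟨hR1, hR2⟩ := hinv α hα
  set u := T f with hu
  set v := Rinv α f with hv
  have hc0 : 0 ≤ c ‖α‖ := le_trans (norm_nonneg _) hbound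
  have hδc : 0 ≤ δ * c ‖α‖ := mul_nonneg hδ.le hc0
  have h1q : 0 < 1 - q := by linarith [hq.2]
  have h2 : Atil u + B α u = f := by
    have := hT2 f
    simpa [ContinuousLinearMap.add_apply] using this
  have h3 : A v + B α v = f := by
    have := hR2 f
    simpa [ContinuousLinearMap.add_apply] using this
  have key : (A + B α) (u - v) = (A - Atil) u := by
    simp only [map_sub, ContinuousLinearMap.add_apply, ContinuousLinearMap.sub_apply]
    rw [h3, ← h2]
    abel
  have hdiff : u - v = Rinv α ((A - Atil) u) := by
    rw [← key, hR1]
  have h4 : ‖(A - Atil) u‖ ≤ δ * ‖u‖ := by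
    calc ‖(A - Atil) u‖ ≤ ‖A - Atil‖ * ‖u‖ := (A - Atil).le_opNorm u
      _ ≤ δ * ‖u‖ := by
          have hrev : ‖A - Atil‖ = ‖Atil - A‖ := norm_sub_rev _ _
          exact mul_le_mul_of_nonneg_right (hrev ▸ hAtil) (norm_nonneg _)
  have hnorm1 : ‖u - v‖ ≤ δ * c ‖α‖ * ‖u‖ := by
    rw [hdiff]
    calc ‖Rinv α ((A - Atil) u)‖ ≤ ‖Rinv α‖ * ‖(A - Atil) u‖ :=
          (Rinv α).le_opNorm _
      _ ≤ c ‖α‖ * (δ * ‖u‖) :=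
          mul_le_mul hbound h4 (norm_nonneg _) hc0
      _ = δ * c ‖α‖ * ‖u‖ := by ring
  have htri : ‖u‖ ≤ ‖v‖ + ‖u - v‖ := by
    have := norm_add_le v (u - v)
    simpa using this
  have h5 : ‖u‖ ≤ ‖v‖ + δ * c ‖α‖ * ‖u‖ := by linarith
  have hA0 : 0 ≤ ‖v‖ + δ * c ‖α‖ * ‖u‖ - ‖u‖ := by linarith
  have hfin : (1 - q) * ‖u‖ ≤ (1 - q) * (‖v‖ + δ * c ‖α‖ / (1 - q) * ‖v‖) := by
    have heq : (1 - q) * (‖v‖ + δ * c ‖α‖ / (1 - q) * ‖v‖)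
        = (1 - q) * ‖v‖ + δ * c ‖α‖ * ‖v‖ := by
      field_simp
    rw [heq]
    nlinarith [mul_nonneg hδc hA0, mul_nonneg (sub_nonneg.mpr hqc) (norm_nonneg u),
      mul_nonneg h1q.le hA0, norm_nonneg u, norm_nonneg v]
  exact le_of_mul_le_mul_left hfin h1q
end

section
/- Let x* ∈ X satisfy A x* = f. Let α ∈ S and δ > 0 with ‖(A + B(α))^{-1}‖ ≤ c(|α|); let Ã : X → Y and f̃ ∈ Y satisfy ‖Ã − A‖ ≤ δ and ‖f̃ − f‖ ≤ δ, and let q ∈ (0,1) satisfy δ·c(|α|) ≤ q. Then the regularized equation (Ã + B(α)) x = f̃ has a unique solution x̃_α, and, writing S(α, x*) = ‖(A + B(α))^{-1} B(α) x*‖, the estimate ‖x̃_α − x*‖ ≤ S(α, x*) + (δ·c(|α|)/(1 − q))·(1 + ‖x*‖ + S(α, x*)) holds. (Main Theorem, estimate (113).) -/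
open Set Filter Topology

/-- Main Theorem, estimate (113): under the coordination condition
`δ·c(|α|) ≤ q < 1`, the regularized equation `(Ã + B(α)) x = f̃` has a unique
solution `x̃_α`, and with `S(α,x*) = ‖(A + B(α))⁻¹ B(α) x*‖` one has
`‖x̃_α − x*‖ ≤ S(α,x*) + (δ c(|α|)/(1−q))(1 + ‖x*‖ + S(α,x*))`. -/
theorem main_theorem_estimate
    {X Y : Type*} [NormedAddCommGroup X] [NormedSpace ℝ X] [CompleteSpace X]
    [NormedAddCommGroup Y] [NormedSpace ℝ Y] [CompleteSpace Y]
    {n : ℕ} (S : Set (EuclideanSpace ℝ (Fin n)))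
    (hS : (0 : EuclideanSpace ℝ (Fin n)) ∈ closure S)
    (A : X →L[ℝ] Y) (B : EuclideanSpace ℝ (Fin n) → X →L[ℝ] Y)
    (Rinv : EuclideanSpace ℝ (Fin n) → Y →L[ℝ] X)
    (hinv : ∀ α ∈ S, (∀ x : X, Rinv α ((A + B α) x) = x) ∧
      (∀ y : Y, (A + B α) (Rinv α y) = y))
    (c : ℝ → ℝ) (hc_cont : ContinuousOn c (Ioi 0)) (hc_pos : ∀ r > 0, 0 < c r)
    (f : Y) (xs : X) (hxs : A xs = f)
    (α : EuclideanSpace ℝ (Fin n)) (hα : α ∈ S)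
    (δ : ℝ) (hδ : 0 < δ) (hbound : ‖Rinv α‖ ≤ c ‖α‖)
    (Atil : X →L[ℝ] Y) (hAtil : ‖Atil - A‖ ≤ δ)
    (ftil : Y) (hftil : ‖ftil - f‖ ≤ δ)
    (q : ℝ) (hq : q ∈ Ioo (0 : ℝ) 1) (hqc : δ * c ‖α‖ ≤ q) :
    ∃ xt : X, (Atil + B α) xt = ftil ∧
      (∀ z : X, (Atil + B α) z = ftil → z = xt) ∧
      ‖xt - xs‖ ≤ ‖Rinv α (B α xs)‖ +
        (δ * c ‖α‖ / (1 - q)) * (1 + ‖xs‖ + ‖Rinv α (B α xs)‖) := by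
  obtain ⟨hlinv, hrinv⟩ := hinv α hα
  set E : X →L[ℝ] Y := Atil - A with hE
  set T : X →L[ℝ] X := (Rinv α).comp E with hT
  have hc0 : 0 ≤ c ‖α‖ := le_trans (norm_nonneg _) hbound
  have hTnorm : ‖T‖ ≤ δ * c ‖α‖ := by
    calc ‖T‖ ≤ ‖Rinv α‖ * ‖E‖ := (Rinv α).opNorm_comp_le E
    _ ≤ c ‖α‖ * δ := mul_le_mul hbound hAtil (norm_nonneg _) hc0
    _ = δ * c ‖α‖ := mul_comm _ _
  have hTq : ‖T‖ ≤ q := hTnorm.trans hqc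
  have hT1 : ‖-T‖ < 1 := by rw [norm_neg]; exact lt_of_le_of_lt hTq hq.2
  let u : (X →L[ℝ] X)ˣ := Units.oneSub (-T) hT1
  have hu : (u : X →L[ℝ] X) = 1 + T := by
    show (1 : X →L[ℝ] X) - -T = 1 + T
    rw [sub_neg_eq_add]
  have happ : ∀ y : X, (u : X →L[ℝ] X) ((↑u⁻¹ : X →L[ℝ] X) y) = y := by
    intro y
    have h := congrArg (fun (M : X →L[ℝ] X) => M y) u.mul_inv
    simpa only [ContinuousLinearMap.mul_apply, ContinuousLinearMap.one_apply] using h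
  have happ' : ∀ y : X, (↑u⁻¹ : X →L[ℝ] X) ((u : X →L[ℝ] X) y) = y := by
    intro y
    have h := congrArg (fun (M : X →L[ℝ] X) => M y) u.inv_mul
    simpa only [ContinuousLinearMap.mul_apply, ContinuousLinearMap.one_apply] using h
  set xt : X := (↑u⁻¹ : X →L[ℝ] X) (Rinv α ftil) with hxt
  clear_value xt
  have key : ∀ z : X, (Atil + B α) z = (A + B α) (z + T z) := by
    intro z
    have h1 : (A + B α) (T z) = E z := hrinv (E z)
    simp only [map_add, h1, ContinuousLinearMap.add_apply, ContinuousLinearMap.sub_apply, hE]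
    abel
  have hxtT : xt + T xt = Rinv α ftil := by
    have h := happ (Rinv α ftil)
    rwa [hu, ContinuousLinearMap.add_apply, ContinuousLinearMap.one_apply, ← hxt] at h
  have hsol : (Atil + B α) xt = ftil := by
    rw [key, hxtT]; exact hrinv ftil
  refine ⟨xt, hsol, ?_, ?_⟩
  · intro z hz
    have h1 : (A + B α) (z + T z) = ftil := by rw [← key]; exact hz
    have h2 : z + T z = Rinv α ftil := by
      have h := congrArg (Rinv α) h1
      rwa [hlinv] at h
    calc z = (↑u⁻¹ : X →L[ℝ] X) ((u : X →L[ℝ] X) z) := (happ' z).symm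
    _ = (↑u⁻¹ : X →L[ℝ] X) (Rinv α ftil) := by
        rw [hu, ContinuousLinearMap.add_apply, ContinuousLinearMap.one_apply, h2]
    _ = xt := hxt.symm
  · set s : X := Rinv α (B α xs) with hs
    have hxα : Rinv α f = xs - s := by
      have hf : f = (A + B α) xs - B α xs := by
        rw [ContinuousLinearMap.add_apply, hxs]; abel
      rw [hf, map_sub, hlinv, hs]
    set w : X := xt - xs + s with hw
    clear_value w
    have hkey2 : w + T w = Rinv α (ftil - f) - T (xs - s) := by
      rw [map_sub (Rinv α), hxα, ← hxtT, hw, map_add, map_sub, map_sub]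
      abel
    have hq1 : 0 < 1 - q := by linarith [hq.2]
    have hδc : 0 ≤ δ * c ‖α‖ := mul_nonneg hδ.le hc0
    have h1 : ‖w + T w‖ ≤ δ * c ‖α‖ * (1 + ‖xs‖ + ‖s‖) := by
      rw [hkey2]
      calc ‖Rinv α (ftil - f) - T (xs - s)‖
          ≤ ‖Rinv α (ftil - f)‖ + ‖T (xs - s)‖ := norm_sub_le _ _
      _ ≤ c ‖α‖ * δ + (δ * c ‖α‖) * (‖xs‖ + ‖s‖) := by
          gcongr
          · calc ‖Rinv α (ftil - f)‖ ≤ ‖Rinv α‖ * ‖ftil - f‖ := (Rinv α).le_opNorm _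
            _ ≤ c ‖α‖ * δ := mul_le_mul hbound hftil (norm_nonneg _) hc0
          · calc ‖T (xs - s)‖ ≤ ‖T‖ * ‖xs - s‖ := T.le_opNorm _
            _ ≤ (δ * c ‖α‖) * (‖xs‖ + ‖s‖) :=
                mul_le_mul hTnorm (norm_sub_le _ _) (norm_nonneg _) hδc
      _ = δ * c ‖α‖ * (1 + ‖xs‖ + ‖s‖) := by ring
    have h2 : ‖w‖ ≤ ‖w + T w‖ + q * ‖w‖ := by
      have : ‖T w‖ ≤ q * ‖w‖ :=
        le_trans (T.le_opNorm w) (mul_le_mul_of_nonneg_right hTq (norm_nonneg _))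
      calc ‖w‖ = ‖w + T w - T w‖ := by rw [add_sub_cancel_right]
      _ ≤ ‖w + T w‖ + ‖T w‖ := norm_sub_le _ _
      _ ≤ ‖w + T w‖ + q * ‖w‖ := by linarith
    have hwbound : ‖w‖ ≤ δ * c ‖α‖ / (1 - q) * (1 + ‖xs‖ + ‖s‖) := by
      rw [div_mul_eq_mul_div, le_div_iff₀ hq1]
      nlinarith [norm_nonneg w]
    have : xt - xs = w - s := by rw [hw]; abel
    calc ‖xt - xs‖ = ‖w - s‖ := by rw [this]
    _ ≤ ‖w‖ + ‖s‖ := norm_sub_le _ _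
    _ ≤ ‖s‖ + δ * c ‖α‖ / (1 - q) * (1 + ‖xs‖ + ‖s‖) := by linarith
end

section
/- Let x* ∈ X with A x* = f be a B-normal solution, i.e. ‖(A + B(α))^{-1} B(α) x*‖ → 0 as S ∋ α → 0. Suppose ‖(A + B(α))^{-1}‖ ≤ c(|α|) for all α ∈ S. For each δ in some interval (0, δ₀] let Ã_δ : X → Y be bounded with ‖Ã_δ − A‖ ≤ δ, let f̃_δ ∈ Y with ‖f̃_δ − f‖ ≤ δ, and let α(δ) ∈ S be chosen so that |α(δ)| → 0 as δ → 0⁺ and δ·c(|α(δ)|) ≤ q for a fixed q ∈ (0,1) with δ·c(|α(δ)|) → 0 as δ → 0⁺. Then for each such δ the equation (Ã_δ + B(α(δ))) x = f̃_δ has a unique solution x̃_δ, and ‖x̃_δ − x*‖ → 0 as δ → 0⁺. (Main Theorem, convergence part.) -/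
/-!
Write `L = A + B(α)` and `R = L⁻¹`. Since `L + D = L ∘ (1 + R D)` and `‖R D‖ ≤ ‖R‖ ‖D‖ < 1`,
the perturbed operator `A' + B(α) = L + (A' - A)` is again bijective. Applying `R` to
`L (x' - x*) = (f' - f) - (A' - A) x' - B(α) x*` gives
`(1 - q) ‖x' - x*‖ ≤ δ c(|α|) (1 + ‖x*‖) + ‖R B(α) x*‖`, and both terms on the right tend to `0`:
the first by the coordination of `α` with `δ`, the second because `x*` is `B`-normal.
-/

open Set Filter Topology Function

section Perturbation

variable {𝕜 X Y : Type*} [NontriviallyNormedField 𝕜]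
  [NormedAddCommGroup X] [NormedSpace 𝕜 X] [NormedAddCommGroup Y] [NormedSpace 𝕜 Y]

theorem ContinuousLinearMap.bijective_add_of_norm_mul_lt_one [CompleteSpace X]
    {L D : X →L[𝕜] Y} {R : Y →L[𝕜] X} (hRL : LeftInverse R L) (hLR : RightInverse R L)
    (h : ‖R‖ * ‖D‖ < 1) : Bijective (L + D) := by
  have hfactor : L + D = L.comp (1 - -R.comp D) := by
    ext x
    simp [hLR (D x)]
  have hsmall : ‖-R.comp D‖ < 1 := (norm_neg _).trans_lt ((opNorm_comp_le R D).trans_lt h)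
  rw [hfactor, coe_comp]
  exact (show Bijective L from ⟨hRL.injective, hLR.surjective⟩).comp
    (isUnit_iff_bijective.mp (isUnit_one_sub_of_norm_lt_one hsmall))

theorem norm_sub_le_of_perturbed_eq {A A' B : X →L[𝕜] Y} {R : Y →L[𝕜] X}
    (hRL : LeftInverse R ⇑(A + B)) {K δ q : ℝ} (hR : ‖R‖ ≤ K) (hA' : ‖A' - A‖ ≤ δ)
    (hδK : δ * K ≤ q) (hq : q < 1) {f f' : Y} {x x' : X} (hx : A x = f) (hf : ‖f' - f‖ ≤ δ)
    (hx' : (A' + B) x' = f') :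
    ‖x' - x‖ ≤ (δ * K * (1 + ‖x‖) + ‖R (B x)‖) / (1 - q) := by
  have hK : 0 ≤ K := (norm_nonneg R).trans hR
  have hδ : 0 ≤ δ := (norm_nonneg _).trans hA'
  have hdiff : x' - x = R (f' - f) - R ((A' - A) x') - R (B x) := by
    rw [← hRL (x' - x), ← map_sub, ← map_sub, ← hx, ← hx']
    congr 1
    simp only [add_apply, sub_apply, map_sub]
    abel
  have hperturb : ‖R ((A' - A) x')‖ ≤ K * (δ * (‖x' - x‖ + ‖x‖)) :=
    calc ‖R ((A' - A) x')‖ ≤ ‖R‖ * (‖A' - A‖ * ‖x'‖) :=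
          (R.le_opNorm _).trans (by gcongr; exact (A' - A).le_opNorm x')
      _ ≤ K * (δ * (‖x' - x‖ + ‖x‖)) := by gcongr; exact norm_le_norm_sub_add x' x
  have hdata : ‖R (f' - f)‖ ≤ K * δ :=
    (R.le_opNorm _).trans (mul_le_mul hR hf (norm_nonneg _) hK)
  have hsum : ‖x' - x‖ ≤ K * δ + K * (δ * (‖x' - x‖ + ‖x‖)) + ‖R (B x)‖ :=
    calc ‖x' - x‖ ≤ ‖R (f' - f)‖ + ‖R ((A' - A) x')‖ + ‖R (B x)‖ := by
          rw [hdiff]; exact (norm_sub_le _ _).trans (by gcongr; exact norm_sub_le _ _)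
      _ ≤ _ := by gcongr
  rw [le_div_iff₀ (sub_pos.mpr hq)]
  nlinarith [mul_le_mul_of_nonneg_right hδK (norm_nonneg (x' - x))]

end Perturbation

theorem main_theorem_convergence_general
    {X Y : Type*} [NormedAddCommGroup X] [NormedSpace ℝ X] [CompleteSpace X]
    [NormedAddCommGroup Y] [NormedSpace ℝ Y] [CompleteSpace Y]
    {n : ℕ} (S : Set (EuclideanSpace ℝ (Fin n)))
    (A : X →L[ℝ] Y) (B : EuclideanSpace ℝ (Fin n) → X →L[ℝ] Y)
    (Rinv : EuclideanSpace ℝ (Fin n) → Y →L[ℝ] X)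
    (hinv : ∀ α ∈ S, (∀ x : X, Rinv α ((A + B α) x) = x) ∧
      (∀ y : Y, (A + B α) (Rinv α y) = y))
    (c : ℝ → ℝ)
    (hbound : ∀ α ∈ S, ‖Rinv α‖ ≤ c ‖α‖)
    (f : Y) (xs : X) (hxs : A xs = f)
    (hBnormal : ∀ ε > 0, ∃ r > 0, ∀ α ∈ S, ‖α‖ < r → ‖Rinv α (B α xs)‖ < ε)
    (δ₀ : ℝ) (hδ₀ : 0 < δ₀)
    (Atil : ℝ → X →L[ℝ] Y) (ftil : ℝ → Y)
    (αsel : ℝ → EuclideanSpace ℝ (Fin n))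
    (hAtil : ∀ δ ∈ Ioc (0 : ℝ) δ₀, ‖Atil δ - A‖ ≤ δ)
    (hftil : ∀ δ ∈ Ioc (0 : ℝ) δ₀, ‖ftil δ - f‖ ≤ δ)
    (hαS : ∀ δ ∈ Ioc (0 : ℝ) δ₀, αsel δ ∈ S)
    (hα0 : Tendsto (fun δ => ‖αsel δ‖) (𝓝[>] (0 : ℝ)) (𝓝 0))
    (q : ℝ) (hq : q ∈ Ioo (0 : ℝ) 1)
    (hqc : ∀ δ ∈ Ioc (0 : ℝ) δ₀, δ * c ‖αsel δ‖ ≤ q)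
    (hcoord : Tendsto (fun δ => δ * c ‖αsel δ‖) (𝓝[>] (0 : ℝ)) (𝓝 0)) :
    (∀ δ ∈ Ioc (0 : ℝ) δ₀, ∃! x : X, (Atil δ + B (αsel δ)) x = ftil δ) ∧
    (∀ xt : ℝ → X,
      (∀ δ ∈ Ioc (0 : ℝ) δ₀, (Atil δ + B (αsel δ)) (xt δ) = ftil δ) →
      Tendsto (fun δ => ‖xt δ - xs‖) (𝓝[>] (0 : ℝ)) (𝓝 0)) := by
  have hmem : Ioc (0 : ℝ) δ₀ ∈ 𝓝[>] (0 : ℝ) := Ioc_mem_nhdsGT hδ₀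
  refine ⟨fun δ hδ => ?_, fun xt hxt => ?_⟩
  · obtain ⟨hL, hR⟩ := hinv _ (hαS δ hδ)
    have hRα := hbound _ (hαS δ hδ)
    have hnorm : ‖Rinv (αsel δ)‖ * ‖Atil δ - A‖ < 1 :=
      calc ‖Rinv (αsel δ)‖ * ‖Atil δ - A‖ ≤ c ‖αsel δ‖ * δ :=
            mul_le_mul hRα (hAtil δ hδ) (norm_nonneg _) ((norm_nonneg _).trans hRα)
        _ = δ * c ‖αsel δ‖ := mul_comm _ _
        _ ≤ q := hqc δ hδ
        _ < 1 := hq.2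
    have hbij := ContinuousLinearMap.bijective_add_of_norm_mul_lt_one (D := Atil δ - A) hL hR hnorm
    rw [show A + B (αsel δ) + (Atil δ - A) = Atil δ + B (αsel δ) by abel] at hbij
    exact hbij.existsUnique _
  · have hnormal : Tendsto (fun α => ‖Rinv α (B α xs)‖) (𝓝[S] 0) (𝓝 0) :=
      Metric.tendsto_nhdsWithin_nhds.2 fun ε hε => (hBnormal ε hε).imp fun _ ⟨hr, h⟩ =>
        ⟨hr, fun α hα hαr => by simpa using h α hα (by simpa using hαr)⟩
    have hαS' : Tendsto αsel (𝓝[>] 0) (𝓝[S] 0) :=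
      tendsto_nhdsWithin_iff.2
        ⟨tendsto_zero_iff_norm_tendsto_zero.2 hα0, eventually_of_mem hmem hαS⟩
    have hbound_tendsto : Tendsto (fun δ => (δ * c ‖αsel δ‖ * (1 + ‖xs‖)
        + ‖Rinv (αsel δ) (B (αsel δ) xs)‖) / (1 - q)) (𝓝[>] 0) (𝓝 0) := by
      simpa using ((hcoord.mul_const (1 + ‖xs‖)).add (hnormal.comp hαS')).div_const (1 - q)
    refine squeeze_zero' (Eventually.of_forall fun _ => norm_nonneg _) ?_ hbound_tendsto
    filter_upwards [hmem] with δ hδ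
    exact norm_sub_le_of_perturbed_eq (hinv _ (hαS δ hδ)).1 (hbound _ (hαS δ hδ)) (hAtil δ hδ)
      (hqc δ hδ) hq.2 hxs (hftil δ hδ) (hxt δ hδ)

/-- Main Theorem, convergence part: if `x*` is a `B`-normal solution of
`A x = f` and the regularization parameter `α(δ)` is coordinated with the
noise level `δ`, then for each `δ ∈ (0, δ₀]` the regularized equation
`(Ã_δ + B(α(δ))) x = f̃_δ` has a unique solution `x̃_δ`, and
`‖x̃_δ − x*‖ → 0` as `δ → 0⁺`. -/
theorem main_theorem_convergence
    {X Y : Type*} [NormedAddCommGroup X] [NormedSpace ℝ X] [CompleteSpace X]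
    [NormedAddCommGroup Y] [NormedSpace ℝ Y] [CompleteSpace Y]
    {n : ℕ} (S : Set (EuclideanSpace ℝ (Fin n)))
    (hS : (0 : EuclideanSpace ℝ (Fin n)) ∈ closure S)
    (A : X →L[ℝ] Y) (B : EuclideanSpace ℝ (Fin n) → X →L[ℝ] Y)
    (Rinv : EuclideanSpace ℝ (Fin n) → Y →L[ℝ] X)
    (hinv : ∀ α ∈ S, (∀ x : X, Rinv α ((A + B α) x) = x) ∧
      (∀ y : Y, (A + B α) (Rinv α y) = y))
    (c : ℝ → ℝ) (hc_cont : ContinuousOn c (Ioi 0)) (hc_pos : ∀ r > 0, 0 < c r)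
    (hbound : ∀ α ∈ S, ‖Rinv α‖ ≤ c ‖α‖)
    (f : Y) (xs : X) (hxs : A xs = f)
    (hBnormal : ∀ ε > 0, ∃ r > 0, ∀ α ∈ S, ‖α‖ < r → ‖Rinv α (B α xs)‖ < ε)
    (δ₀ : ℝ) (hδ₀ : 0 < δ₀)
    (Atil : ℝ → X →L[ℝ] Y) (ftil : ℝ → Y)
    (αsel : ℝ → EuclideanSpace ℝ (Fin n))
    (hAtil : ∀ δ ∈ Ioc (0 : ℝ) δ₀, ‖Atil δ - A‖ ≤ δ)
    (hftil : ∀ δ ∈ Ioc (0 : ℝ) δ₀, ‖ftil δ - f‖ ≤ δ)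
    (hαS : ∀ δ ∈ Ioc (0 : ℝ) δ₀, αsel δ ∈ S)
    (hα0 : Tendsto (fun δ => ‖αsel δ‖) (𝓝[>] (0 : ℝ)) (𝓝 0))
    (q : ℝ) (hq : q ∈ Ioo (0 : ℝ) 1)
    (hqc : ∀ δ ∈ Ioc (0 : ℝ) δ₀, δ * c ‖αsel δ‖ ≤ q)
    (hcoord : Tendsto (fun δ => δ * c ‖αsel δ‖) (𝓝[>] (0 : ℝ)) (𝓝 0)) :
    (∀ δ ∈ Ioc (0 : ℝ) δ₀, ∃! x : X, (Atil δ + B (αsel δ)) x = ftil δ) ∧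
    (∀ xt : ℝ → X,
      (∀ δ ∈ Ioc (0 : ℝ) δ₀, (Atil δ + B (αsel δ)) (xt δ) = ftil δ) →
      Tendsto (fun δ => ‖xt δ - xs‖) (𝓝[>] (0 : ℝ)) (𝓝 0)) :=
  main_theorem_convergence_general S A B Rinv hinv c hbound f xs hxs hBnormal δ₀ hδ₀ Atil ftil αsel
    hAtil hftil hαS hα0 q hq hqc hcoord
end

section
/- Suppose ‖(A + B(α))^{-1}‖ ≤ c(|α|) and ‖B(α)‖ ≤ d(|α|) for all α ∈ S, with sup_{α ∈ S} c(|α|)·d(|α|) < ∞. Let L₀ = {x ∈ X : B(α)x ∈ R(A) for all α ∈ S} and assume that for every x ∈ L₀ there exist elements x₁(α) ∈ X with A x₁(α) = B(α) x and ‖x₁(α)‖ → 0 as S ∋ α → 0. Then for every x* in the closure of L₀ one has ‖(A + B(α))^{-1} B(α) x*‖ → 0 as S ∋ α → 0; in particular every solution of A x = f lying in the closure of L₀ is B-normal, so the closure of L₀ is a correctness class for the equation A x = f. (Corollary 1 / Remark 2.) -/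
open Set Filter Topology

/-- Corollary 1 / Remark 2: if `‖(A+B(α))⁻¹‖ ≤ c(|α|)`, `‖B(α)‖ ≤ d(|α|)`,
`sup_{α∈S} c(|α|) d(|α|) < ∞`, and for every `x` in
`L₀ = {x : B(α)x ∈ R(A) for all α ∈ S}` there are elements `x₁(α)` with
`A x₁(α) = B(α) x` and `‖x₁(α)‖ → 0` as `S ∋ α → 0`, then for every `x*` in
the closure of `L₀` one has `‖(A+B(α))⁻¹ B(α) x*‖ → 0` as `S ∋ α → 0`
(so every solution of `A x = f` lying in the closure of `L₀` is `B`-normal,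
i.e. the closure of `L₀` is a correctness class). -/
theorem corollary1_correctness_class
    {X Y : Type*} [NormedAddCommGroup X] [NormedSpace ℝ X] [CompleteSpace X]
    [NormedAddCommGroup Y] [NormedSpace ℝ Y] [CompleteSpace Y]
    {n : ℕ} (S : Set (EuclideanSpace ℝ (Fin n)))
    (hS : (0 : EuclideanSpace ℝ (Fin n)) ∈ closure S)
    (A : X →L[ℝ] Y) (B : EuclideanSpace ℝ (Fin n) → X →L[ℝ] Y)
    (Rinv : EuclideanSpace ℝ (Fin n) → Y →L[ℝ] X)
    (hinv : ∀ α ∈ S, (∀ x : X, Rinv α ((A + B α) x) = x) ∧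
      (∀ y : Y, (A + B α) (Rinv α y) = y))
    (c d : ℝ → ℝ)
    (hRb : ∀ α ∈ S, ‖Rinv α‖ ≤ c ‖α‖) (hBb : ∀ α ∈ S, ‖B α‖ ≤ d ‖α‖)
    (hsup : ∃ M : ℝ, ∀ α ∈ S, c ‖α‖ * d ‖α‖ ≤ M)
    (hx1 : ∀ x ∈ {x : X | ∀ α ∈ S, B α x ∈ Set.range A},
      ∃ x1 : EuclideanSpace ℝ (Fin n) → X,
        (∀ α ∈ S, A (x1 α) = B α x) ∧
        (∀ ε > 0, ∃ r > 0, ∀ α ∈ S, ‖α‖ < r → ‖x1 α‖ < ε))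
    (f : Y) (hf : f ∈ Set.range A) :
    ∀ xs ∈ closure {x : X | ∀ α ∈ S, B α x ∈ Set.range A},
      ∀ ε > 0, ∃ r > 0, ∀ α ∈ S, ‖α‖ < r → ‖Rinv α (B α xs)‖ < ε := by
  obtain ⟨M, hM⟩ := hsup
  set M' := max M 0 with hM'def
  have hM'0 : (0:ℝ) ≤ M' := le_max_right _ _
  have key : ∀ α ∈ S, ∀ z : X, ‖Rinv α (B α z)‖ ≤ M' * ‖z‖ := by
    intro α hα z
    calc ‖Rinv α (B α z)‖ ≤ ‖Rinv α‖ * ‖B α z‖ := (Rinv α).le_opNorm _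
    _ ≤ c ‖α‖ * (d ‖α‖ * ‖z‖) := by
        apply mul_le_mul (hRb α hα) ?_ (norm_nonneg _) ((norm_nonneg _).trans (hRb α hα))
        exact ((B α).le_opNorm z).trans (mul_le_mul_of_nonneg_right (hBb α hα) (norm_nonneg z))
    _ = (c ‖α‖ * d ‖α‖) * ‖z‖ := by ring
    _ ≤ M' * ‖z‖ := mul_le_mul_of_nonneg_right ((hM α hα).trans (le_max_left _ _)) (norm_nonneg z)
  intro xs hxs ε hε
  have hK : (0:ℝ) < M' + 1 := by linarith
  obtain ⟨x, hxL, hdist⟩ := Metric.mem_closure_iff.mp hxs (ε/(2*(M'+1))) (by positivity)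
  obtain ⟨x1, hx1A, hx1lim⟩ := hx1 x hxL
  obtain ⟨r, hr, hrlim⟩ := hx1lim (ε/(2*(M'+1))) (by positivity)
  refine ⟨r, hr, fun α hα hαr => ?_⟩
  have h1 : Rinv α (B α x) = x1 α - Rinv α (B α (x1 α)) := by
    have hi := (hinv α hα).1 (x1 α)
    rw [← hx1A α hα]
    have hA : A (x1 α) = (A + B α) (x1 α) - B α (x1 α) := by simp
    rw [hA, map_sub, hi]
  have h2 : ‖Rinv α (B α x)‖ ≤ (M' + 1) * ‖x1 α‖ := by
    rw [h1]
    calc ‖x1 α - Rinv α (B α (x1 α))‖ ≤ ‖x1 α‖ + ‖Rinv α (B α (x1 α))‖ := norm_sub_le _ _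
    _ ≤ ‖x1 α‖ + M' * ‖x1 α‖ := by linarith [key α hα (x1 α)]
    _ = (M'+1) * ‖x1 α‖ := by ring
  have h3 : Rinv α (B α xs) = Rinv α (B α (xs - x)) + Rinv α (B α x) := by
    simp [map_sub]
  have h4 := key α hα (xs - x)
  have h5 := hrlim α hα hαr
  have hdist' : ‖xs - x‖ < ε/(2*(M'+1)) := by rwa [← dist_eq_norm]
  calc ‖Rinv α (B α xs)‖ ≤ ‖Rinv α (B α (xs - x))‖ + ‖Rinv α (B α x)‖ := by
        rw [h3]; exact norm_add_le _ _
  _ ≤ M' * ‖xs - x‖ + (M'+1) * ‖x1 α‖ := add_le_add h4 h2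
  _ < ε := by
    have heq : ε/(2*(M'+1)) * (M'+1) = ε/2 := by field_simp
    nlinarith [norm_nonneg (xs - x), norm_nonneg (x1 α)]
end

section
/- Let B : X → Y be a fixed bounded linear operator, and suppose for every α ∈ (0, α₀] the operator A + αB is continuously invertible with ‖(A + αB)^{-1}‖ ≤ c(α), where c : (0, α₀] → (0, ∞) is continuous. Suppose there is a positive integer n ≥ 1 such that c(α)·αⁱ → ∞ as α → 0⁺ for each i = 0, …, n−1, while limsup_{α → 0⁺} c(α)·αⁿ < ∞. Let x₀ ∈ X satisfy A x₀ = f, and (if n ≥ 2) let x₁, …, x_{n−1} ∈ X satisfy A x_i = B x_{i−1} for i = 1, …, n−1. If B x_{n−1} belongs to the closure of R(A), then x₀ is B-normal: ‖(A + αB)^{-1}(αB) x₀‖ → 0 as α → 0⁺. (Theorem 3, sufficiency direction.) -/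
open Set Filter Topology

/-- Theorem 3 (sufficiency direction): with scalar regularization `B(α) = αB`,
if `‖(A + αB)⁻¹‖ ≤ c(α)` on `(0, α₀]` with `c(α)αⁱ → ∞` for `i < n` and
`limsup_{α→0⁺} c(α)αⁿ < ∞`, and if `A x₀ = f`, `A xᵢ = B x_{i−1}` for
`i = 1, …, n−1` and `B x_{n−1} ∈ closure R(A)`, then `x₀` is `B`-normal:
`‖(A + αB)⁻¹ (αB) x₀‖ → 0` as `α → 0⁺`. -/
theorem theorem3_sufficiency
    {X Y : Type*} [NormedAddCommGroup X] [NormedSpace ℝ X] [CompleteSpace X]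
    [NormedAddCommGroup Y] [NormedSpace ℝ Y] [CompleteSpace Y]
    (A B : X →L[ℝ] Y) (α₀ : ℝ) (hα₀ : 0 < α₀)
    (Rinv : ℝ → Y →L[ℝ] X)
    (hinv : ∀ α ∈ Ioc (0 : ℝ) α₀, (∀ x : X, Rinv α ((A + α • B) x) = x) ∧
      (∀ y : Y, (A + α • B) (Rinv α y) = y))
    (c : ℝ → ℝ) (hc_cont : ContinuousOn c (Ioc 0 α₀))
    (hc_pos : ∀ α ∈ Ioc (0 : ℝ) α₀, 0 < c α)
    (hbound : ∀ α ∈ Ioc (0 : ℝ) α₀, ‖Rinv α‖ ≤ c α)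
    (nn : ℕ) (hn : 1 ≤ nn)
    (hdiv : ∀ i < nn, Tendsto (fun α => c α * α ^ i) (𝓝[>] (0 : ℝ)) atTop)
    (hlimsup : ∃ M : ℝ, ∀ᶠ α in 𝓝[>] (0 : ℝ), c α * α ^ nn ≤ M)
    (f : Y) (x : ℕ → X) (hx0 : A (x 0) = f)
    (hxi : ∀ i : ℕ, 1 ≤ i → i ≤ nn - 1 → A (x i) = B (x (i - 1)))
    (hclos : B (x (nn - 1)) ∈ closure (Set.range A)) :
    Tendsto (fun α => ‖Rinv α (α • B (x 0))‖) (𝓝[>] (0 : ℝ)) (𝓝 0) := by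
  rw [← tendsto_zero_iff_norm_tendsto_zero]
  have hmem : ∀ᶠ α in 𝓝[>] (0:ℝ), α ∈ Ioc (0:ℝ) α₀ :=
    Ioc_mem_nhdsGT_of_mem ⟨le_rfl, hα₀⟩
  -- key algebraic identity
  have key : ∀ α ∈ Ioc (0:ℝ) α₀, ∀ m, m ≤ nn - 1 →
      Rinv α (α • B (x 0)) =
        (∑ k ∈ Finset.range m, ((-1:ℝ)^k * α^(k+1)) • x (k+1)) +
          ((-1:ℝ)^m * α^(m+1)) • Rinv α (B (x m)) := by
    intro α hα m
    induction m with
    | zero =>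
      intro _
      simp [map_smul]
    | succ m ih =>
      intro hm
      have hm' : m ≤ nn - 1 := Nat.le_of_succ_le hm
      have hAx : A (x (m+1)) = B (x m) := by
        have := hxi (m+1) (Nat.le_add_left 1 m) hm
        simpa using this
      have h1 : Rinv α (B (x m)) = x (m+1) - α • Rinv α (B (x (m+1))) := by
        have hx : B (x m) = (A + α • B) (x (m+1)) - α • B (x (m+1)) := by
          simp [ContinuousLinearMap.add_apply, ContinuousLinearMap.smul_apply, hAx]
        rw [hx, map_sub, (hinv α hα).1, map_smul]
      rw [ih hm', h1, Finset.sum_range_succ, smul_sub, smul_smul]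
      have hco : ((-1:ℝ)^m * α^(m+1)) * α = -(((-1:ℝ)^(m+1) * α^(m+1+1))) := by
        ring
      rw [hco]
      module
  -- sum part tends to 0
  have h1 : Tendsto (fun α : ℝ => ∑ k ∈ Finset.range (nn-1),
      ((-1:ℝ)^k * α^(k+1)) • x (k+1)) (𝓝[>] (0:ℝ)) (𝓝 0) := by
    have hcont : Continuous fun α : ℝ => ∑ k ∈ Finset.range (nn-1),
        ((-1:ℝ)^k * α^(k+1)) • x (k+1) := by
      apply continuous_finset_sum
      intro k _
      exact ((continuous_const.mul (continuous_pow (k+1))).smul continuous_const)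
    have h0 := hcont.tendsto 0
    simp only [zero_pow (Nat.succ_ne_zero _), mul_zero, zero_smul,
      Finset.sum_const_zero] at h0
    exact h0.mono_left nhdsWithin_le_nhds
  -- remainder part tends to 0
  have h2 : Tendsto (fun α : ℝ => ((-1:ℝ)^(nn-1) * α^nn) • Rinv α (B (x (nn-1))))
      (𝓝[>] (0:ℝ)) (𝓝 0) := by
    rw [NormedAddCommGroup.tendsto_nhds_zero]
    intro ε hε
    obtain ⟨M, hM⟩ := hlimsup
    set M' : ℝ := max M 1 with hM'def
    have hM' : 0 < M' := lt_of_lt_of_le one_pos (le_max_right M 1)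
    have hMM' : M ≤ M' := le_max_left M 1
    -- approximate B (x (nn-1)) by an element of the range of A
    have hε4 : 0 < ε / (4 * M') := by positivity
    obtain ⟨y, hy, hdist⟩ := Metric.mem_closure_iff.mp hclos (ε / (4 * M')) hε4
    obtain ⟨z, rfl⟩ := hy
    -- eventual smallness of the auxiliary terms
    have et1 : ∀ᶠ α in 𝓝[>] (0:ℝ), α^nn * ‖z‖ < ε / 4 := by
      have : Tendsto (fun α : ℝ => α^nn * ‖z‖) (𝓝[>] (0:ℝ)) (𝓝 0) := by
        have h := (((continuous_pow nn).tendsto 0).mono_left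
          (nhdsWithin_le_nhds : 𝓝[>] (0:ℝ) ≤ 𝓝 0)).mul_const ‖z‖
        simpa [zero_pow (Nat.one_le_iff_ne_zero.mp hn)] using h
      exact this.eventually_lt_const (by positivity)
    have et2 : ∀ᶠ α in 𝓝[>] (0:ℝ), α * (M' * ‖B z‖) < ε / 4 := by
      have : Tendsto (fun α : ℝ => α * (M' * ‖B z‖)) (𝓝[>] (0:ℝ)) (𝓝 0) := by
        have := ((continuous_id.tendsto (0:ℝ)).mono_left
          (nhdsWithin_le_nhds : 𝓝[>] (0:ℝ) ≤ 𝓝 0)).mul_const (M' * ‖B z‖)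
        simpa using this
      exact this.eventually_lt_const (by positivity)
    filter_upwards [hmem, hM, et1, et2] with α hα hcα ht1 ht2
    have hαpos : 0 < α := hα.1
    have hcpos := hc_pos α hα
    have hb : ∀ u : Y, ‖Rinv α u‖ ≤ c α * ‖u‖ := fun u =>
      le_trans ((Rinv α).le_opNorm u)
        (mul_le_mul_of_nonneg_right (hbound α hα) (norm_nonneg u))
    have hRz : Rinv α (A z) = z - α • Rinv α (B z) := by
      have hx : A z = (A + α • B) z - α • B z := by
        simp [ContinuousLinearMap.add_apply, ContinuousLinearMap.smul_apply]
      rw [hx, map_sub, (hinv α hα).1, map_smul]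
    set w := B (x (nn-1)) with hw
    have hsplit : Rinv α w = Rinv α (w - A z) + (z - α • Rinv α (B z)) := by
      rw [← hRz, ← map_add]
      congr 1
      abel
    have hnorm1 : ‖Rinv α w‖ ≤ c α * ‖w - A z‖ + ‖z‖ + α * ‖Rinv α (B z)‖ := by
      calc ‖Rinv α w‖ ≤ ‖Rinv α (w - A z)‖ + ‖z - α • Rinv α (B z)‖ := by
            rw [hsplit]; exact norm_add_le _ _
        _ ≤ c α * ‖w - A z‖ + (‖z‖ + ‖α • Rinv α (B z)‖) :=
            add_le_add (hb _) (norm_sub_le _ _)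
        _ = c α * ‖w - A z‖ + ‖z‖ + α * ‖Rinv α (B z)‖ := by
            rw [norm_smul, Real.norm_eq_abs, abs_of_pos hαpos]; ring
    have hcoef : ‖((-1:ℝ)^(nn-1) * α^nn)‖ = α^nn := by
      rw [Real.norm_eq_abs, abs_mul, abs_pow, abs_neg, abs_one, one_pow, one_mul,
        abs_of_pos (pow_pos hαpos nn)]
    have hαn : (0:ℝ) < α^nn := pow_pos hαpos nn
    have hd : ‖w - A z‖ < ε / (4 * M') := by
      rw [← dist_eq_norm]; exact hdist
    have hBz := hb (B z)
    have key1 : c α * α^nn * ‖w - A z‖ < ε / 4 := by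
      have h1 : c α * α^nn * ‖w - A z‖ ≤ M' * ‖w - A z‖ :=
        mul_le_mul_of_nonneg_right (le_trans hcα hMM') (norm_nonneg _)
      have h2 : M' * ‖w - A z‖ < M' * (ε / (4 * M')) :=
        mul_lt_mul_of_pos_left hd hM'
      have h3 : M' * (ε / (4 * M')) = ε / 4 := by
        field_simp
      linarith
    have key2 : α^nn * (α * ‖Rinv α (B z)‖) < ε / 4 := by
      have h1 : α^nn * (α * ‖Rinv α (B z)‖) ≤ α * (c α * α^nn * ‖B z‖) := by
        have := mul_le_mul_of_nonneg_left hBz (le_of_lt hαpos)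
        nlinarith [norm_nonneg (Rinv α (B z)), hαn.le, hαpos.le]
      have h2 : α * (c α * α^nn * ‖B z‖) ≤ α * (M' * ‖B z‖) := by
        apply mul_le_mul_of_nonneg_left _ hαpos.le
        exact mul_le_mul_of_nonneg_right (le_trans hcα hMM') (norm_nonneg _)
      linarith
    calc ‖((-1:ℝ)^(nn-1) * α^nn) • Rinv α w‖ = α^nn * ‖Rinv α w‖ := by
          rw [norm_smul, hcoef]
      _ ≤ α^nn * (c α * ‖w - A z‖ + ‖z‖ + α * ‖Rinv α (B z)‖) :=
          mul_le_mul_of_nonneg_left hnorm1 hαn.le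
      _ = c α * α^nn * ‖w - A z‖ + α^nn * ‖z‖ + α^nn * (α * ‖Rinv α (B z)‖) := by
          ring
      _ < ε / 4 + ε / 4 + ε / 4 := by
          exact add_lt_add (add_lt_add key1 ht1) key2
      _ < ε := by linarith
  have hsum := h1.add h2
  rw [add_zero] at hsum
  refine hsum.congr' ?_
  filter_upwards [hmem] with α hα
  rw [key α hα (nn-1) le_rfl, Nat.sub_add_cancel hn]
end

section
/- Let A : X → Y be a bounded linear operator whose kernel is spanned by linearly independent elements φ₁, …, φₙ ∈ X and whose range R(A) is closed, with Y the direct sum of R(A) and the span of z₁, …, zₙ ∈ Y. Let ψ₁, …, ψₙ ∈ Y* vanish on R(A) with ⟨z_i, ψ_k⟩ = 1 if i = k and 0 otherwise, and let γ₁, …, γₙ ∈ X* satisfy det[⟨φ_i, γ_k⟩]_{i,k=1}^{n} ≠ 0. Then: (i) for every f ∈ Y the equation A x + Σ_{i=1}^{n} ⟨x, γ_i⟩ z_i = f − Σ_{i=1}^{n} ⟨f, ψ_i⟩ z_i has a unique solution; (ii) if x* is the unique solution of A x = f − Σ⟨f, ψ_i⟩ z_i satisfying ⟨x*, γ_i⟩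 = 0 for i = 1, …, n, and f̃_δ ∈ Y satisfies ‖f̃_δ − f‖ ≤ δ, then the unique solution x̃_δ of A x + Σ⟨x, γ_i⟩ z_i = f̃_δ − Σ⟨f̃_δ, ψ_i⟩ z_i satisfies ‖x̃_δ − x*‖ → 0 as δ → 0⁺. -/
/-!
Write `T = A + Σᵢ ⟨·, γᵢ⟩ zᵢ`. A solution of `T x = 0` has `A x ∈ R(A) ∩ span z = 0`, so `x` lies in
`ker A = span φ` and all `⟨x, γᵢ⟩` vanish (the `zᵢ` are independent, being biorthogonal to the
`ψᵢ`); since `det[⟨φᵢ, γₖ⟩] ≠ 0` this forces `x = 0`. Conversely,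
given `y = A u + Σᵢ bᵢ zᵢ`, the same nonsingularity lets us add to `u` an element of `ker A` with
prescribed values `⟨·, γᵢ⟩ = bᵢ`. Hence `T` is a bijection of Banach spaces, with bounded inverse by
the open mapping theorem, and both the perturbed solutions and `x*` are images of the data under
the continuous map `f ↦ T⁻¹ (f − Σᵢ ⟨f, ψᵢ⟩ zᵢ)`.
-/

open Set Filter Topology

section Algebraic

variable {K M N ι : Type*} [Field K] [AddCommGroup M] [Module K M] [AddCommGroup N] [Module K N]
  [Fintype ι]

def stabilizedOp (A : M →ₗ[K] N) (γ : ι → Module.Dual K M) (z : ι → N) : M →ₗ[K] N :=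
  A + ∑ i, (γ i).smulRight (z i)

@[simp]
theorem stabilizedOp_apply (A : M →ₗ[K] N) (γ : ι → Module.Dual K M) (z : ι → N) (x : M) :
    stabilizedOp A γ z x = A x + ∑ i, γ i x • z i := by
  simp [stabilizedOp]

theorem bijective_dual_apply_sum_smul [DecidableEq ι] (φ : ι → M) (γ : ι → Module.Dual K M)
    (hdet : (Matrix.of fun i k => γ k (φ i)).det ≠ 0) :
    Function.Bijective fun c : ι → K => fun k => γ k (∑ i, c i • φ i) := by
  have hunit : IsUnit (Matrix.of fun i k => γ k (φ i)) :=
    (Matrix.isUnit_iff_isUnit_det _).mpr hdet.isUnit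
  have hvecMul : (fun c : ι → K => fun k => γ k (∑ i, c i • φ i)) =
      (Matrix.of fun i k => γ k (φ i)).vecMul := by
    ext c k
    simp [Matrix.vecMul, dotProduct]
  rw [hvecMul]
  exact ⟨Matrix.vecMul_injective_iff_isUnit.mpr hunit, Matrix.vecMul_surjective_iff_isUnit.mpr hunit⟩

variable [DecidableEq ι] {A : M →ₗ[K] N} {φ : ι → M} {γ : ι → Module.Dual K M} {z : ι → N}

theorem injective_stabilizedOp (hker : LinearMap.ker A ≤ Submodule.span K (range φ))
    (hdisj : Disjoint (LinearMap.range A) (Submodule.span K (range z)))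
    (hz : LinearIndependent K z) (hdet : (Matrix.of fun i k => γ k (φ i)).det ≠ 0) :
    Function.Injective (stabilizedOp A γ z) := by
  refine (injective_iff_map_eq_zero _).mpr fun x hx => ?_
  rw [stabilizedOp_apply, add_eq_zero_iff_eq_neg] at hx
  have hAx : A x = 0 := Submodule.disjoint_def.mp hdisj _ ⟨x, rfl⟩ <|
    hx ▸ neg_mem (Submodule.sum_smul_mem _ _ fun i _ => Submodule.subset_span ⟨i, rfl⟩)
  have hγx : ∀ k, γ k x = 0 := by
    rw [hAx, eq_comm, neg_eq_zero] at hx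
    exact fun k => by simpa using Fintype.linearIndependent_iff.mp hz _ hx k
  obtain ⟨c, rfl⟩ := (Submodule.mem_span_range_iff_exists_fun K).mp (hker hAx)
  have hc : c = 0 := (bijective_dual_apply_sum_smul φ γ hdet).injective (by ext k; simp [hγx k])
  simp [hc]

theorem surjective_stabilizedOp (hker : ∀ i, A (φ i) = 0)
    (hsup : LinearMap.range A ⊔ Submodule.span K (range z) = ⊤)
    (hdet : (Matrix.of fun i k => γ k (φ i)).det ≠ 0) :
    Function.Surjective (stabilizedOp A γ z) := by
  intro y
  obtain ⟨_, ⟨u, rfl⟩, _, hb, rfl⟩ := Submodule.mem_sup.mp (hsup ▸ Submodule.mem_top : y ∈ _)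
  obtain ⟨b, rfl⟩ := (Submodule.mem_span_range_iff_exists_fun K).mp hb
  obtain ⟨c, hc⟩ := (bijective_dual_apply_sum_smul φ γ hdet).surjective fun k => b k - γ k u
  refine ⟨u + ∑ i, c i • φ i, ?_⟩
  have hγ : ∀ k, γ k (u + ∑ i, c i • φ i) = b k := fun k => by
    rw [map_add, show γ k (∑ i, c i • φ i) = b k - γ k u from congrFun hc k, add_sub_cancel]
  rw [stabilizedOp_apply, map_add, map_sum]
  simp only [map_smul, hker, smul_zero, Finset.sum_const_zero, add_zero, hγ]

theorem bijective_stabilizedOp (hker : LinearMap.ker A = Submodule.span K (range φ))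
    (hcompl : IsCompl (LinearMap.range A) (Submodule.span K (range z)))
    (hz : LinearIndependent K z) (hdet : (Matrix.of fun i k => γ k (φ i)).det ≠ 0) :
    Function.Bijective (stabilizedOp A γ z) :=
  ⟨injective_stabilizedOp hker.le hcompl.disjoint hz hdet,
    surjective_stabilizedOp (fun i => hker.ge (Submodule.subset_span ⟨i, rfl⟩))
      hcompl.sup_eq_top hdet⟩

end Algebraic

theorem exists_continuousLinearEquiv_apply_eq_stabilizedOp {𝕜 X Y ι : Type*}
    [NontriviallyNormedField 𝕜] [NormedAddCommGroup X] [NormedSpace 𝕜 X] [CompleteSpace X]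
    [NormedAddCommGroup Y] [NormedSpace 𝕜 Y] [CompleteSpace Y] [Fintype ι]
    {A : X →L[𝕜] Y} {γ : ι → X →L[𝕜] 𝕜} {z : ι → Y}
    (h : Function.Bijective (stabilizedOp (A : X →ₗ[𝕜] Y) (fun i => γ i) z)) :
    ∃ E : X ≃L[𝕜] Y, ∀ x, E x = A x + ∑ i, γ i x • z i :=
  ⟨(LinearEquiv.ofBijective _ h).toContinuousLinearEquivOfContinuous (by
      change Continuous fun x => stabilizedOp _ _ _ x
      simp only [stabilizedOp_apply]
      fun_prop), fun x => stabilizedOp_apply _ _ _ x⟩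

theorem tendsto_nhdsGT_zero_of_norm_sub_le {E : Type*} [SeminormedAddCommGroup E] {u : ℝ → E}
    {a : E} (h : ∀ δ > 0, ‖u δ - a‖ ≤ δ) : Tendsto u (𝓝[>] 0) (𝓝 a) :=
  tendsto_iff_norm_sub_tendsto_zero.mpr <| squeeze_zero' (.of_forall fun _ => norm_nonneg _)
    (eventually_nhdsWithin_of_forall h) (tendsto_id.mono_left nhdsWithin_le_nhds)

theorem fredholm_finite_rank_stabilizer_general
    {X Y : Type*} [NormedAddCommGroup X] [NormedSpace ℝ X] [CompleteSpace X]
    [NormedAddCommGroup Y] [NormedSpace ℝ Y] [CompleteSpace Y]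
    (A : X →L[ℝ] Y) (n : ℕ)
    (φ : Fin n → X)
    (hker : LinearMap.ker (A : X →ₗ[ℝ] Y) = Submodule.span ℝ (Set.range φ))
    (z : Fin n → Y)
    (hcompl : IsCompl (LinearMap.range (A : X →ₗ[ℝ] Y)) (Submodule.span ℝ (Set.range z)))
    (ψ : Fin n → Y →L[ℝ] ℝ)
    (hψz : ∀ i k : Fin n, ψ k (z i) = if i = k then 1 else 0)
    (γ : Fin n → X →L[ℝ] ℝ)
    (hdet : Matrix.det (Matrix.of fun i k => γ k (φ i)) ≠ 0) :
    (∀ f : Y, ∃! x : X,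
      A x + ∑ i, (γ i x) • z i = f - ∑ i, (ψ i f) • z i) ∧
    (∀ (f : Y) (xs : X),
      A xs = f - ∑ i, (ψ i f) • z i → (∀ i, γ i xs = 0) →
      ∀ ftil : ℝ → Y, (∀ δ > 0, ‖ftil δ - f‖ ≤ δ) →
      ∀ xt : ℝ → X,
        (∀ δ > 0, A (xt δ) + ∑ i, (γ i (xt δ)) • z i
            = ftil δ - ∑ i, (ψ i (ftil δ)) • z i) →
        Tendsto (fun δ => ‖xt δ - xs‖) (𝓝[>] (0 : ℝ)) (𝓝 0)) := by
  have hz : LinearIndependent ℝ z := .of_pairwise_dual_eq_zero_one z (fun k => ψ k)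
    (fun k i hki => by simp [hψz, Ne.symm hki]) (fun k => by simp [hψz])
  obtain ⟨E, hE⟩ := exists_continuousLinearEquiv_apply_eq_stabilizedOp
    (bijective_stabilizedOp hker hcompl hz hdet)
  set Q : Y → Y := fun f => f - ∑ i, ψ i f • z i
  have hsol : ∀ {f x}, A x + ∑ i, γ i x • z i = Q f → x = E.symm (Q f) := fun h =>
    E.eq_symm_apply.mpr ((hE _).trans h)
  refine ⟨fun f => by simpa only [hE] using E.bijective.existsUnique (Q f), ?_⟩
  intro f xs hxs hγxs ftil hftil xt hxt
  rw [hsol (f := f) (x := xs) (by simp [hγxs, hxs, Q])]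
  have hlim : Tendsto (fun δ => E.symm (Q (ftil δ))) (𝓝[>] 0) (𝓝 (E.symm (Q f))) :=
    ((show Continuous (E.symm ∘ Q) by fun_prop).tendsto f).comp
      (tendsto_nhdsGT_zero_of_norm_sub_le hftil)
  refine tendsto_iff_norm_sub_tendsto_zero.mp (hlim.congr' ?_)
  filter_upwards [self_mem_nhdsWithin] with δ hδ
  exact (hsol (hxt δ hδ)).symm

/-- Finite-rank stabilization for a Fredholm operator: with
`B = Σᵢ ⟨·, γᵢ⟩ zᵢ` and `det[⟨φᵢ, γₖ⟩] ≠ 0`,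
(i) for every `f` the perturbed equation
`A x + Σᵢ ⟨x, γᵢ⟩ zᵢ = f − Σᵢ ⟨f, ψᵢ⟩ zᵢ` has a unique solution;
(ii) if `x*` is the unique solution of `A x = f − Σᵢ ⟨f, ψᵢ⟩ zᵢ` with
`⟨x*, γᵢ⟩ = 0`, and `‖f̃_δ − f‖ ≤ δ`, then the unique solution `x̃_δ` of the
perturbed equation with data `f̃_δ` satisfies `‖x̃_δ − x*‖ → 0` as `δ → 0⁺`. -/
theorem fredholm_finite_rank_stabilizer
    {X Y : Type*} [NormedAddCommGroup X] [NormedSpace ℝ X] [CompleteSpace X]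
    [NormedAddCommGroup Y] [NormedSpace ℝ Y] [CompleteSpace Y]
    (A : X →L[ℝ] Y) (n : ℕ)
    (φ : Fin n → X) (hφ : LinearIndependent ℝ φ)
    (hker : LinearMap.ker (A : X →ₗ[ℝ] Y) = Submodule.span ℝ (Set.range φ))
    (hclosed : IsClosed (LinearMap.range (A : X →ₗ[ℝ] Y) : Set Y))
    (z : Fin n → Y)
    (hcompl : IsCompl (LinearMap.range (A : X →ₗ[ℝ] Y)) (Submodule.span ℝ (Set.range z)))
    (ψ : Fin n → Y →L[ℝ] ℝ)
    (hψA : ∀ (k : Fin n) (x : X), ψ k (A x) = 0)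
    (hψz : ∀ i k : Fin n, ψ k (z i) = if i = k then 1 else 0)
    (γ : Fin n → X →L[ℝ] ℝ)
    (hdet : Matrix.det (Matrix.of fun i k => γ k (φ i)) ≠ 0) :
    (∀ f : Y, ∃! x : X,
      A x + ∑ i, (γ i x) • z i = f - ∑ i, (ψ i f) • z i) ∧
    (∀ (f : Y) (xs : X),
      A xs = f - ∑ i, (ψ i f) • z i → (∀ i, γ i xs = 0) →
      ∀ ftil : ℝ → Y, (∀ δ > 0, ‖ftil δ - f‖ ≤ δ) →
      ∀ xt : ℝ → X,
        (∀ δ > 0, A (xt δ) + ∑ i, (γ i (xt δ)) • z i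
            = ftil δ - ∑ i, (ψ i (ftil δ)) • z i) →
        Tendsto (fun δ => ‖xt δ - xs‖) (𝓝[>] (0 : ℝ)) (𝓝 0)) :=
  fredholm_finite_rank_stabilizer_general A n φ hker z hcompl ψ hψz γ hdet
end

section
/- Let a < b be real numbers, α > 0, and let A be the Volterra integration operator on C([a,b]), (A x)(t) = ∫_a^t x(s) ds. Then the inverse of A + αI satisfies the operator norm bound ‖(A + αI)^{-1}‖ ≤ (1/α)·(2 − e^{−(b−a)/α}), and (1/α)·(2 − e^{−(b−a)/α}) < 2/α; equivalently, for every f ∈ C([a,b]), sup_{t∈[a,b]} |((A + αI)^{-1} f)(t)| ≤ (1/α)·(2 − e^{−(b−a)/α})·sup_{t∈[a,b]} |f(t)|. -/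
open Set intervalIntegral

/-!
The kernel `s ↦ e^{-(t-s)/α} / α²` of the integral part of `(A + αI)⁻¹` is positive with
total mass `(1 - e^{-(t-a)/α}) / α` on `[a, t]`, so by the triangle inequality
`|((A + αI)⁻¹ f)(t)| ≤ (1/α) (2 - e^{-(t-a)/α}) ‖f‖`, and the factor is largest at `t = b`.
-/

theorem integral_exp_neg_sub_div (a t : ℝ) {α : ℝ} (hα : α ≠ 0) :
    ∫ s in a..t, Real.exp (-((t - s) / α)) = α * (1 - Real.exp (-((t - a) / α))) := by
  have hderiv : ∀ s : ℝ, HasDerivAt (fun s => α * Real.exp (-((t - s) / α)))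
      (Real.exp (-((t - s) / α))) s := fun s => by
    have hlin : HasDerivAt (fun s : ℝ => -((t - s) / α)) (1 / α) s :=
      (((hasDerivAt_id s).const_sub t).div_const α).neg.congr_deriv (by ring)
    exact (hlin.exp.const_mul α).congr_deriv (by field_simp)
  rw [integral_eq_sub_of_hasDerivAt (fun s _ => hderiv s)
    (Continuous.intervalIntegrable (by fun_prop) _ _)]
  simp only [sub_self, zero_div, neg_zero, Real.exp_zero]
  ring

theorem abs_integral_exp_neg_sub_div_mul_le {a t α M : ℝ} {g : ℝ → ℝ} (hα : α ≠ 0)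
    (hat : a ≤ t) (hg : ∀ s, |g s| ≤ M) :
    |∫ s in a..t, Real.exp (-((t - s) / α)) * g s|
      ≤ α * (1 - Real.exp (-((t - a) / α))) * M := by
  have hbound : ∀ s, ‖Real.exp (-((t - s) / α)) * g s‖ ≤ Real.exp (-((t - s) / α)) * M :=
    fun s => by
      rw [Real.norm_eq_abs, abs_mul, Real.abs_exp]
      exact mul_le_mul_of_nonneg_left (hg s) (Real.exp_pos _).le
  calc |∫ s in a..t, Real.exp (-((t - s) / α)) * g s|
      ≤ ∫ s in a..t, Real.exp (-((t - s) / α)) * M :=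
        norm_integral_le_of_norm_le hat (.of_forall fun s _ => hbound s)
          (Continuous.intervalIntegrable (by fun_prop) _ _)
    _ = α * (1 - Real.exp (-((t - a) / α))) * M := by
        rw [integral_mul_const, integral_exp_neg_sub_div a t hα]

theorem abs_volterra_resolvent_le {a b t α M : ℝ} {g : ℝ → ℝ} (hα : 0 < α)
    (hat : a ≤ t) (htb : t ≤ b) (hg : ∀ s, |g s| ≤ M) :
    |g t / α - (1 / α ^ 2) * ∫ s in a..t, Real.exp (-((t - s) / α)) * g s|
      ≤ (1 / α) * (2 - Real.exp (-((b - a) / α))) * M := by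
  have hM : 0 ≤ M := (abs_nonneg _).trans (hg t)
  have hexp : Real.exp (-((b - a) / α)) ≤ Real.exp (-((t - a) / α)) := by
    gcongr
  calc |g t / α - (1 / α ^ 2) * ∫ s in a..t, Real.exp (-((t - s) / α)) * g s|
      ≤ |g t| / α + (1 / α ^ 2) * |∫ s in a..t, Real.exp (-((t - s) / α)) * g s| := by
        refine (abs_sub _ _).trans_eq ?_
        rw [abs_div, abs_mul, abs_of_pos hα, abs_of_pos (by positivity : (0 : ℝ) < 1 / α ^ 2)]
    _ ≤ M / α + (1 / α ^ 2) * (α * (1 - Real.exp (-((t - a) / α))) * M) := by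
        gcongr
        · exact hg t
        · exact abs_integral_exp_neg_sub_div_mul_le hα.ne' hat hg
    _ = (1 / α) * (2 - Real.exp (-((t - a) / α))) * M := by
        field_simp
        ring
    _ ≤ (1 / α) * (2 - Real.exp (-((b - a) / α))) * M := by
        gcongr

theorem one_div_mul_two_sub_exp_lt {α : ℝ} (hα : 0 < α) (x : ℝ) :
    (1 / α) * (2 - Real.exp x) < 2 / α := by
  rw [one_div_mul_eq_div]
  gcongr
  linarith [Real.exp_pos x]

/-- Norm bound for the inverse of `A + αI` where `A` is the Volterra
integration operator on `C([a,b])`: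
`‖(A + αI)⁻¹‖ ≤ (1/α)(2 − e^{−(b−a)/α}) < 2/α`, and for every `f`,
`sup_t |((A + αI)⁻¹ f)(t)| ≤ (1/α)(2 − e^{−(b−a)/α}) ‖f‖`. -/
theorem volterra_inverse_norm_bound
    (a b : ℝ) (hab : a < b) (α : ℝ) (hα : 0 < α) :
    (∀ T : C(Icc a b, ℝ) →L[ℝ] C(Icc a b, ℝ),
      (∀ (f : C(Icc a b, ℝ)) (t : Icc a b),
        T f t = f t / α - (1 / α ^ 2) *
          ∫ s in a..(t : ℝ), Real.exp (-(((t : ℝ) - s) / α)) * IccExtend hab.le ⇑f s) →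
      ‖T‖ ≤ (1 / α) * (2 - Real.exp (-((b - a) / α))) ∧
      ∀ (f : C(Icc a b, ℝ)) (t : Icc a b),
        |T f t| ≤ (1 / α) * (2 - Real.exp (-((b - a) / α))) * ‖f‖) ∧
    (1 / α) * (2 - Real.exp (-((b - a) / α))) < 2 / α := by
  refine ⟨fun T hT => ?_, one_div_mul_two_sub_exp_lt hα _⟩
  have hpointwise : ∀ (f : C(Icc a b, ℝ)) (t : Icc a b),
      |T f t| ≤ (1 / α) * (2 - Real.exp (-((b - a) / α))) * ‖f‖ := fun f t => by
    rw [hT f t, ← IccExtend_val hab.le f t]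
    exact abs_volterra_resolvent_le hα t.2.1 t.2.2 fun s => f.norm_coe_le_norm _
  have hC : 0 ≤ (1 / α) * (2 - Real.exp (-((b - a) / α))) := by
    have : Real.exp (-((b - a) / α)) ≤ 1 :=
      Real.exp_le_one_iff.mpr (neg_nonpos.mpr (div_nonneg (sub_nonneg.mpr hab.le) hα.le))
    exact mul_nonneg (by positivity) (by linarith)
  refine ⟨T.opNorm_le_bound hC fun f => ?_, hpointwise⟩
  exact (ContinuousMap.norm_le _ (by positivity)).mpr (hpointwise f)
end
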